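/- Assume C is semiprime. The following are equivalent: (1) C is PP; (2) C is mp and Min(C) is a compact space in the subspace topology induced from the Zariski topology on Spec(C); (3) C is PF and Min(C) is a compact space in the subspace topology induced from the Zariski topology on Spec(C). -/

import Mathlib

open CompleteLattice

/-- A complete lattice equipped with a commutator operation, axiomatizing the congruence
lattice of an algebra in a semidegenerate congruence-modular variety whose compact
congruences are closed under the commutator. -/
class CommutatorLattice (C : Type*) [CompleteLattice C] where
  comm : C → C → C
  comm_comm : ∀ a b : C, comm a b = comm b a
  comm_sSup : ∀ (s : Set C) (b : C), comm (sSup s) b = ⨆ a ∈ s, comm a b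
  comm_le_inf : ∀ a b : C, comm a b ≤ a ⊓ b
  comm_top : ∀ a : C, comm a ⊤ = a
  compactlyGenerated : ∀ x : C,
    ∃ s : Set C, (∀ a ∈ s, IsCompactElement a) ∧ sSup s = x
  top_isCompact : IsCompactElement (⊤ : C)
  comm_isCompact : ∀ a b : C, IsCompactElement a → IsCompactElement b →
    IsCompactElement (comm a b)

namespace CommutatorLattice

variable {C : Type*} [CompleteLattice C] [CommutatorLattice C]

/-- The residuation `a → b := ⨆ {c | [a,c] ≤ b}`. -/
def resid (a b : C) : C := sSup {c : C | comm a c ≤ b}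

/-- The annihilator `a⊥ := a → ⊥`. -/
def ann (a : C) : C := resid a ⊥

/-- Iterated commutator: `cpow a n = [a,a]^n`, with the convention `[a,a]^0 = a`.
Note that `[a,b]^n` for `n ≥ 1` equals `cpow (comm a b) (n-1)`. -/
def cpow (a : C) : ℕ → C
  | 0 => a
  | n + 1 => comm (cpow a n) (cpow a n)

/-- Prime elements: `p ≠ ⊤` and `[a,b] ≤ p` implies `a ≤ p` or `b ≤ p`. -/
def IsPrime (p : C) : Prop := p ≠ ⊤ ∧ ∀ a b : C, comm a b ≤ p → a ≤ p ∨ b ≤ p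

/-- The radical `ρ(a) := ⨅ {p prime | a ≤ p}`. -/
def radical (a : C) : C := sInf {p : C | IsPrime p ∧ a ≤ p}

variable (C) in
/-- `C` is semiprime if `ρ(⊥) = ⊥`. -/
def Semiprime : Prop := radical (⊥ : C) = ⊥

variable (C) in
/-- Condition (⋆): for all compact `a`, `b` and all `n ≥ 1` there is `m ≥ 0` with
`[[a,a]^m, [b,b]^m] ≤ [a,b]^n`.  Here `cpow (comm a b) n = [a,b]^(n+1)`, so `n : ℕ`
ranges exactly over the exponents `≥ 1` of the paper. -/
def Star : Prop := ∀ a b : C, IsCompactElement a → IsCompactElement b →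
  ∀ n : ℕ, ∃ m : ℕ, comm (cpow a m) (cpow b m) ≤ cpow (comm a b) n

/-- Pure elements: `t ⊔ a⊥ = ⊤` for every compact `a ≤ t`. -/
def IsPure (t : C) : Prop := ∀ a : C, IsCompactElement a → a ≤ t → t ⊔ ann a = ⊤

/-- w-pure elements: `t ⊔ (a → ρ(⊥)) = ⊤` for every compact `a ≤ t`. -/
def IsWPure (t : C) : Prop :=
  ∀ a : C, IsCompactElement a → a ≤ t → t ⊔ resid a (radical ⊥) = ⊤

/-- Complemented elements. -/
def IsComplEl (a : C) : Prop := ∃ b : C, a ⊔ b = ⊤ ∧ a ⊓ b = ⊥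

/-- Regular elements: joins of sets of complemented elements. -/
def IsRegular (t : C) : Prop := ∃ S : Set C, (∀ a ∈ S, IsComplEl a) ∧ t = sSup S

/-- Max-regular elements: maximal among regular elements distinct from `⊤`. -/
def IsMaxRegular (t : C) : Prop :=
  IsRegular t ∧ t ≠ ⊤ ∧ ∀ u : C, IsRegular u → u ≠ ⊤ → t ≤ u → u = t

/-- Maximal elements of `C \ {⊤}`. -/
def IsMaximal (p : C) : Prop := p ≠ ⊤ ∧ ∀ q : C, q ≠ ⊤ → p ≤ q → q = p

/-- Minimal primes. -/
def IsMinPrime (p : C) : Prop := IsPrime p ∧ ∀ q : C, IsPrime q → q ≤ p → q = p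

variable (C) in
/-- `C` is mp if every prime lies above a unique minimal prime. -/
def MP : Prop := ∀ p : C, IsPrime p → ∃! q : C, IsMinPrime q ∧ q ≤ p

variable (C) in
/-- `C` is PF if `a⊥` is pure for every compact `a`. -/
def PF : Prop := ∀ a : C, IsCompactElement a → IsPure (ann a)

variable (C) in
/-- `C` is PP if `a⊥` is complemented for every compact `a`. -/
def PP : Prop := ∀ a : C, IsCompactElement a → IsComplEl (ann a)

/-- `O(p) := ⨆ {a compact | a⊥ ≰ p}`. -/
def O (p : C) : C := sSup {a : C | IsCompactElement a ∧ ¬ ann a ≤ p}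

variable (C) in
/-- `C` is normal. -/
def Normal : Prop := ∀ t u : C, t ⊔ u = ⊤ →
  ∃ a b : C, t ⊔ a = ⊤ ∧ u ⊔ b = ⊤ ∧ comm a b = ⊥

variable (C) in
/-- `C` is B-normal. -/
def BNormal : Prop := ∀ t u : C, t ⊔ u = ⊤ →
  ∃ a b : C, IsComplEl a ∧ IsComplEl b ∧ t ⊔ a = ⊤ ∧ u ⊔ b = ⊤ ∧ comm a b = ⊥

variable (C) in
/-- `C` is purified. -/
def Purified : Prop := ∀ p q : C, IsMinPrime p → IsMinPrime q → p ≠ q →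
  ∃ a : C, IsComplEl a ∧ a ≤ p ∧ ann a ≤ q

variable (C) in
/-- The prime spectrum of `C`. -/
abbrev Spec := {p : C // IsPrime p}

variable (C) in
/-- The Zariski topology on `Spec C`: the closed sets are the `V(t) = {p | t ≤ p}`,
equivalently the topology generated by the sets `D(t) = {p | t ≰ p}`. -/
def zariskiTop : TopologicalSpace (Spec C) :=
  TopologicalSpace.generateFrom {U : Set (Spec C) | ∃ t : C, U = {p : Spec C | ¬ t ≤ p.1}}

variable (C) in
/-- The flat topology on `Spec C`: generated by the open basis `V(a)`, `a` compact. -/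
def flatTop : TopologicalSpace (Spec C) :=
  TopologicalSpace.generateFrom
    {U : Set (Spec C) | ∃ a : C, IsCompactElement a ∧ U = {p : Spec C | a ≤ p.1}}

/-!
In a semiprime lattice a compact `a` lies in a minimal prime `p` iff `a⊥ ≰ p`. This makes PF
equivalent to mp: two distinct minimal primes below a prime `q` would be separated by a compact
`a` and a compact `b ≤ a⊥`, and then `a⊥ ⊔ b⊥ = ⊤` would lie below `q`. It also turns
compactness of `Min(C)` into a lattice condition: every `t` outside all minimal primes lies above
a compact `c` with `c⊥ = ⊥`. PP yields this condition by compactness of `⊤`, applied to the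
directed family `c⊥⊥` (`c ≤ t` compact), whose join is `⊤`. Conversely, PF together with the
condition for `t = a ⊔ a⊥` gives a compact `b ≤ a⊥` with `(a ⊔ b)⊥ = ⊥`, so `b⊥` complements `a⊥`.
-/

instance : IsCompactlyGenerated C := ⟨compactlyGenerated⟩

instance : IsCoatomic C := coatomic_of_top_compact top_isCompact

section CompactlyGenerated

variable {α : Type*} [CompleteLattice α] {a b c t x : α}

lemma isCompactElement_bot : IsCompactElement (⊥ : α) := by
  simpa using isCompactElement_finsetSup (f := id) (∅ : Finset α) (by simp)

lemma isCompactElement_sup (ha : IsCompactElement a) (hb : IsCompactElement b) :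
    IsCompactElement (a ⊔ b) := by
  classical
  simpa using isCompactElement_finsetSup (f := id) {a, b} (by simp [ha, hb])

lemma directedOn_compact_le (t : α) :
    DirectedOn (· ≤ ·) {c : α | IsCompactElement c ∧ c ≤ t} :=
  fun a ha b hb => ⟨a ⊔ b, ⟨isCompactElement_sup ha.1 hb.1, sup_le ha.2 hb.2⟩,
    le_sup_left, le_sup_right⟩

variable [IsCompactlyGenerated α]

lemma exists_compact_le_not_le (h : ¬ x ≤ t) :
    ∃ c : α, IsCompactElement c ∧ c ≤ x ∧ ¬ c ≤ t := by
  simpa [le_iff_compact_le_imp (a := x)] using h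

lemma exists_compact_le_sup_of_le_sup (hc : IsCompactElement c) (hle : c ≤ a ⊔ x) :
    ∃ b : α, IsCompactElement b ∧ b ≤ x ∧ c ≤ a ⊔ b := by
  set K := {b : α | IsCompactElement b ∧ b ≤ x}
  have hbot : ⊥ ∈ K := ⟨isCompactElement_bot, bot_le⟩
  have hsup : a ⊔ x ≤ sSup ((a ⊔ ·) '' K) := by
    refine sup_le (le_sSup_of_le ⟨⊥, hbot, rfl⟩ le_sup_left) ?_
    rw [← sSup_compact_le_eq x]
    exact sSup_le fun b hb => le_sSup_of_le ⟨b, hb, rfl⟩ le_sup_right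
  obtain ⟨_, ⟨b, hb, rfl⟩, hcb⟩ := (isCompactElement_iff_le_of_directed_sSup_le _ c).1 hc
    ((a ⊔ ·) '' K) ⟨_, ⊥, hbot, rfl⟩
    ((directedOn_compact_le x).mono_comp fun _ _ h => sup_le_sup_left h a) (hle.trans hsup)
  exact ⟨b, hb.1, hb.2, hcb⟩

end CompactlyGenerated

variable {a b c p q t x : C}

lemma comm_le_left (a b : C) : comm a b ≤ a := (comm_le_inf a b).trans inf_le_left

lemma comm_le_right (a b : C) : comm a b ≤ b := (comm_le_inf a b).trans inf_le_right

lemma comm_sup_left (a b x : C) : comm (a ⊔ b) x = comm a x ⊔ comm b x := by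
  rw [← sSup_pair, comm_sSup, iSup_pair]

lemma comm_sup_right (x a b : C) : comm x (a ⊔ b) = comm x a ⊔ comm x b := by
  simp only [comm_comm x, comm_sup_left]

lemma comm_mono_left (b : C) (h : a ≤ x) : comm a b ≤ comm x b := by
  have := comm_sup_left a x b
  rw [sup_eq_right.2 h] at this
  exact this ▸ le_sup_left

lemma comm_mono_right (a : C) (h : b ≤ x) : comm a b ≤ comm a x := by
  simpa only [comm_comm a] using comm_mono_left a h

lemma comm_sup_sup_le (m a b : C) : comm (m ⊔ a) (m ⊔ b) ≤ m ⊔ comm a b := by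
  rw [comm_sup_left, comm_sup_right, comm_sup_right]
  exact sup_le
    (sup_le ((comm_le_left _ _).trans le_sup_left) ((comm_le_left _ _).trans le_sup_left))
    (sup_le ((comm_le_right _ _).trans le_sup_left) le_sup_right)

lemma comm_ann (a : C) : comm a (ann a) = ⊥ := by
  rw [comm_comm, ann, resid, comm_sSup]
  exact le_bot_iff.1 (iSup₂_le fun c hc => (comm_comm c a).trans_le hc)

lemma le_ann_iff : x ≤ ann a ↔ comm a x = ⊥ :=
  ⟨fun h => le_bot_iff.1 ((comm_mono_right a h).trans (comm_ann a).le),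
    fun h => le_sSup h.le⟩

lemma le_ann_of_inf_eq_bot (h : a ⊓ x = ⊥) : x ≤ ann a :=
  le_ann_iff.2 (le_bot_iff.1 (h ▸ comm_le_inf a x))

lemma ann_antitone : Antitone (ann : C → C) := fun _ b hab =>
  le_ann_iff.2 (le_bot_iff.1 ((comm_mono_left _ hab).trans (comm_ann b).le))

lemma ann_sup (a b : C) : ann (a ⊔ b) = ann a ⊓ ann b := by
  refine le_antisymm (le_inf (ann_antitone le_sup_left) (ann_antitone le_sup_right)) ?_
  rw [le_ann_iff, comm_sup_left, le_ann_iff.1 inf_le_left, le_ann_iff.1 inf_le_right, sup_bot_eq]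

lemma ann_eq_bot_of_ann_ann_eq_top (h : ann (ann a) = ⊤) : ann a = ⊥ := by
  rw [← comm_top (ann a), ← h, comm_ann]

lemma IsComplEl.sup_ann_eq_top (h : IsComplEl a) : a ⊔ ann a = ⊤ := by
  obtain ⟨b, hsup, hinf⟩ := h
  exact top_unique (hsup ▸ sup_le_sup_left (le_ann_of_inf_eq_bot hinf) a)

lemma IsPrime.le_or_le_of_comm_eq_bot (hp : IsPrime p) (h : comm a b = ⊥) : a ≤ p ∨ b ≤ p :=
  hp.2 a b (h ▸ bot_le)

lemma IsPrime.ann_le_of_not_le (hp : IsPrime p) (ha : ¬ a ≤ p) : ann a ≤ p :=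
  (hp.le_or_le_of_comm_eq_bot (comm_ann a)).resolve_left ha

lemma isPrime_of_isCoatom (hm : IsCoatom p) : IsPrime p := by
  refine ⟨hm.1, fun a b hab => ?_⟩
  by_contra! ⟨ha, hb⟩
  have hpa : p ⊔ a = ⊤ := hm.2 _ (left_lt_sup.2 ha)
  have hpb : p ⊔ b = ⊤ := hm.2 _ (left_lt_sup.2 hb)
  refine hm.1 (top_unique ?_)
  calc ⊤ = comm (p ⊔ a) (p ⊔ b) := by rw [hpa, hpb, comm_top]
    _ ≤ p ⊔ comm a b := comm_sup_sup_le p a b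
    _ ≤ p := sup_le le_rfl hab

lemma exists_isPrime_ge (ht : t ≠ ⊤) : ∃ p : C, IsPrime p ∧ t ≤ p :=
  let ⟨p, hp, htp⟩ := (eq_top_or_exists_le_coatom t).resolve_left ht
  ⟨p, isPrime_of_isCoatom hp, htp⟩

lemma exists_isPrime_avoiding {M : Set C} (hne : M.Nonempty)
    (hM : ∀ w ∈ M, IsCompactElement w) (hcomm : ∀ w₁ ∈ M, ∀ w₂ ∈ M, comm w₁ w₂ ∈ M)
    (ht : ∀ w ∈ M, ¬ w ≤ t) :
    ∃ p : C, IsPrime p ∧ t ≤ p ∧ ∀ w ∈ M, ¬ w ≤ p := by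
  set S := {x : C | t ≤ x ∧ ∀ w ∈ M, ¬ w ≤ x}
  have hchains : ∀ s ⊆ S, IsChain (· ≤ ·) s → ∀ y ∈ s, ∃ ub ∈ S, ∀ z ∈ s, z ≤ ub := by
    refine fun s hs hchain y hy => ⟨sSup s, ⟨(hs hy).1.trans (le_sSup hy), fun w hw hws => ?_⟩,
      fun z hz => le_sSup hz⟩
    obtain ⟨z, hz, hwz⟩ := (isCompactElement_iff_le_of_directed_sSup_le _ w).1
      (hM w hw) s ⟨y, hy⟩ hchain.directedOn hws
    exact (hs hz).2 w hw hwz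
  obtain ⟨p, htp, ⟨-, hpM⟩, hmax⟩ := zorn_le_nonempty₀ S hchains t ⟨le_rfl, ht⟩
  have hmeet : ∀ x, ¬ x ≤ p → ∃ w ∈ M, w ≤ p ⊔ x := fun x hx => by
    by_contra! hno
    exact hx (le_sup_right.trans (hmax ⟨htp.trans le_sup_left, hno⟩ le_sup_left))
  refine ⟨p, ⟨fun hp => ?_, fun a b hab => ?_⟩, htp, hpM⟩
  · obtain ⟨w, hw⟩ := hne
    exact hpM w hw (hp ▸ le_top)
  by_contra! ⟨ha, hb⟩
  obtain ⟨w₁, hw₁, hw₁a⟩ := hmeet a ha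
  obtain ⟨w₂, hw₂, hw₂b⟩ := hmeet b hb
  refine hpM _ (hcomm w₁ hw₁ w₂ hw₂) ?_
  calc comm w₁ w₂ ≤ comm (p ⊔ a) (p ⊔ b) :=
        (comm_mono_left _ hw₁a).trans (comm_mono_right _ hw₂b)
    _ ≤ p ⊔ comm a b := comm_sup_sup_le p a b
    _ ≤ p := sup_le le_rfl hab

lemma isPrime_sInf_of_isChain {s : Set C} (hchain : IsChain (· ≤ ·) s) (hne : s.Nonempty)
    (hs : ∀ p ∈ s, IsPrime p) : IsPrime (sInf s) := by
  obtain ⟨y, hy⟩ := hne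
  refine ⟨fun htop => (hs y hy).1 (top_unique (htop ▸ sInf_le hy)), fun a b hab => ?_⟩
  by_contra! ⟨ha, hb⟩
  obtain ⟨p₁, hp₁, hap₁⟩ : ∃ p ∈ s, ¬ a ≤ p := by simpa [le_sInf_iff] using ha
  obtain ⟨p₂, hp₂, hbp₂⟩ : ∃ p ∈ s, ¬ b ≤ p := by simpa [le_sInf_iff] using hb
  rcases hchain.total hp₁ hp₂ with h₁₂ | h₂₁
  · exact ((hs p₁ hp₁).2 a b (hab.trans (sInf_le hp₁))).elim hap₁ fun h => hbp₂ (h.trans h₁₂)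
  · exact ((hs p₂ hp₂).2 a b (hab.trans (sInf_le hp₂))).elim (fun h => hap₁ (h.trans h₂₁)) hbp₂

lemma exists_isMinPrime_le (hq : IsPrime q) : ∃ p : C, IsMinPrime p ∧ p ≤ q := by
  obtain ⟨p, hpq, hp, hmin⟩ := @zorn_le_nonempty₀ Cᵒᵈ _ {p | IsPrime (OrderDual.ofDual p)}
    (fun s hs hchain y hy => ⟨sSup s, isPrime_sInf_of_isChain hchain.symm ⟨y, hy⟩ hs,
      fun z hz => le_sSup hz⟩) (OrderDual.toDual q) hq
  exact ⟨p, ⟨hp, fun r hr hrp => le_antisymm hrp (hmin hr hrp)⟩, hpq⟩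

lemma le_radical (a : C) : a ≤ radical a := le_sInf fun _ hp => hp.2

lemma radical_inf_le_radical_comm (a b : C) : radical a ⊓ radical b ≤ radical (comm a b) :=
  le_sInf fun _ ⟨hp, hab⟩ => (hp.2 a b hab).elim
    (fun ha => inf_le_left.trans (sInf_le ⟨hp, ha⟩))
    (fun hb => inf_le_right.trans (sInf_le ⟨hp, hb⟩))

/-- The set of compact `w` with `a ⊓ s ≤ ρ(w)` for some `s ≰ q` is an m-system containing `a`
and every compact `c ≰ q`; semiprimeness and `a⊥ ≤ q` keep it away from `⊥`. -/
lemma exists_isPrime_le_not_le_of_ann_le (h : Semiprime C) (hq : IsPrime q)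
    (ha : IsCompactElement a) (hann : ann a ≤ q) : ∃ r : C, IsPrime r ∧ r ≤ q ∧ ¬ a ≤ r := by
  set M := {w : C | IsCompactElement w ∧ ∃ s, ¬ s ≤ q ∧ a ⊓ s ≤ radical w}
  have haM : a ∈ M :=
    ⟨ha, ⊤, fun htop => hq.1 (top_unique htop), inf_le_left.trans (le_radical a)⟩
  have hcM : ∀ c, IsCompactElement c → ¬ c ≤ q → c ∈ M :=
    fun c hc hcq => ⟨hc, c, hcq, inf_le_right.trans (le_radical c)⟩
  have hcomm : ∀ w₁ ∈ M, ∀ w₂ ∈ M, comm w₁ w₂ ∈ M := by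
    rintro w₁ ⟨hw₁, s₁, hs₁q, hs₁⟩ w₂ ⟨hw₂, s₂, hs₂q, hs₂⟩
    refine ⟨comm_isCompact _ _ hw₁ hw₂, comm s₁ s₂, fun hs => (hq.2 _ _ hs).elim hs₁q hs₂q, ?_⟩
    calc a ⊓ comm s₁ s₂ ≤ (a ⊓ s₁) ⊓ (a ⊓ s₂) :=
          le_inf (inf_le_inf_left a (comm_le_left _ _)) (inf_le_inf_left a (comm_le_right _ _))
      _ ≤ radical w₁ ⊓ radical w₂ := inf_le_inf hs₁ hs₂
      _ ≤ radical (comm w₁ w₂) := radical_inf_le_radical_comm w₁ w₂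
  have hbot : ∀ w ∈ M, ¬ w ≤ ⊥ := by
    rintro w ⟨-, s, hsq, hs⟩ hw
    rw [le_bot_iff.1 hw, h] at hs
    exact hsq ((le_ann_of_inf_eq_bot (le_bot_iff.1 hs)).trans hann)
  obtain ⟨r, hr, -, hrM⟩ := exists_isPrime_avoiding ⟨a, haM⟩ (fun w hw => hw.1) hcomm hbot
  refine ⟨r, hr, le_iff_compact_le_imp.2 fun c hc hcr => ?_, hrM a haM⟩
  by_contra hcq
  exact hrM c (hcM c hc hcq) hcr

lemma IsMinPrime.ann_not_le (h : Semiprime C) (hp : IsMinPrime p) (ha : IsCompactElement a)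
    (hap : a ≤ p) : ¬ ann a ≤ p := fun hann =>
  let ⟨r, hr, hrp, har⟩ := exists_isPrime_le_not_le_of_ann_le h hp.1 ha hann
  har (hp.2 r hr hrp ▸ hap)

lemma ann_eq_bot_iff (h : Semiprime C) (ha : IsCompactElement a) :
    ann a = ⊥ ↔ ∀ p : C, IsMinPrime p → ¬ a ≤ p := by
  refine ⟨fun hann p hp hap => hp.ann_not_le h ha hap (hann ▸ bot_le), fun hmin => ?_⟩
  refine le_bot_iff.1 (h ▸ le_sInf fun q hq => ?_)
  obtain ⟨p, hp, hpq⟩ := exists_isMinPrime_le hq.1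
  exact (hp.1.ann_le_of_not_le (hmin p hp)).trans hpq

lemma pf_of_pp (hpp : PP C) : PF C := fun a ha _ _ hba =>
  top_unique ((hpp a ha).sup_ann_eq_top ▸ sup_le_sup_left (ann_antitone hba) (ann a))

lemma mp_of_pf (h : Semiprime C) (hpf : PF C) : MP C := by
  have hle : ∀ q p₁ p₂ : C, IsPrime q → IsMinPrime p₁ → IsMinPrime p₂ → p₁ ≤ q → p₂ ≤ q →
      p₁ ≤ p₂ := by
    intro q p₁ p₂ hq hp₁ hp₂ hp₁q hp₂q
    by_contra hle
    obtain ⟨a, ha, hap₁, hap₂⟩ := exists_compact_le_not_le hle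
    obtain ⟨b, hb, hba, hbp₁⟩ := exists_compact_le_not_le (hp₁.ann_not_le h ha hap₁)
    refine hq.1 (top_unique ?_)
    calc ⊤ = ann a ⊔ ann b := (hpf a ha b hb hba).symm
      _ ≤ q := sup_le ((hp₂.1.ann_le_of_not_le hap₂).trans hp₂q)
          ((hp₁.1.ann_le_of_not_le hbp₁).trans hp₁q)
  intro q hq
  obtain ⟨p, hp, hpq⟩ := exists_isMinPrime_le hq
  exact ⟨p, ⟨hp, hpq⟩, fun p' ⟨hp', hp'q⟩ =>
    le_antisymm (hle q p' p hq hp' hp hp'q hpq) (hle q p p' hq hp hp' hpq hp'q)⟩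

lemma MP.ann_not_le (h : Semiprime C) (hmp : MP C) (hq : IsPrime q) (hp : IsMinPrime p)
    (hpq : p ≤ q) (ha : IsCompactElement a) (hap : a ≤ p) : ¬ ann a ≤ q := fun hann => by
  obtain ⟨r, hr, hrq, har⟩ := exists_isPrime_le_not_le_of_ann_le h hq ha hann
  obtain ⟨p', hp', hp'r⟩ := exists_isMinPrime_le hr
  obtain ⟨u, -, huniq⟩ := hmp q hq
  have hpp' : p = p' := (huniq p ⟨hp, hpq⟩).trans (huniq p' ⟨hp', hp'r.trans hrq⟩).symm
  exact har ((hpp' ▸ hap).trans hp'r)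

lemma pf_of_mp (h : Semiprime C) (hmp : MP C) : PF C := by
  intro a ha b hb hba
  by_contra hne
  obtain ⟨q, hq, hle⟩ := exists_isPrime_ge hne
  obtain ⟨p, hp, hpq⟩ := exists_isMinPrime_le hq
  rcases hp.1.le_or_le_of_comm_eq_bot (le_ann_iff.1 hba) with hap | hbp
  · exact hmp.ann_not_le h hq hp hpq ha hap (le_sup_left.trans hle)
  · exact hmp.ann_not_le h hq hp hpq hb hbp (le_sup_right.trans hle)

variable (C) in
/-- `Min(C) ⊆ D(t)` forces `Min(C) ⊆ D(c)` for some compact `c ≤ t`, the latter being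
expressed as `c⊥ = ⊥`. -/
def MinPrimesCoverCond : Prop := ∀ t : C, (∀ p : C, IsMinPrime p → ¬ t ≤ p) →
  ∃ c : C, IsCompactElement c ∧ c ≤ t ∧ ann c = ⊥

lemma isOpen_zariski_basic (t : C) :
    @IsOpen (Spec C) (zariskiTop C) {p : Spec C | ¬ t ≤ p.1} :=
  TopologicalSpace.isOpen_generateFrom_of_mem ⟨t, rfl⟩

lemma minPrimesCoverCond_of_isCompact (h : Semiprime C)
    (hmin : @IsCompact (Spec C) (zariskiTop C) {q : Spec C | IsMinPrime q.1}) :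
    MinPrimesCoverCond C := by
  let := zariskiTop C
  intro t ht
  let K := {c : C // IsCompactElement c ∧ c ≤ t}
  have : Nonempty K := ⟨⟨⊥, isCompactElement_bot, bot_le⟩⟩
  have hcov : {q : Spec C | IsMinPrime q.1} ⊆ ⋃ c : K, {p : Spec C | ¬ c.1 ≤ p.1} := by
    intro q hq
    obtain ⟨c, hc, hct, hcq⟩ := exists_compact_le_not_le (ht q.1 hq)
    exact Set.mem_iUnion.2 ⟨⟨c, hc, hct⟩, hcq⟩
  have hdir : Directed (· ⊆ ·) fun c : K => {p : Spec C | ¬ c.1 ≤ p.1} :=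
    fun c₁ c₂ => ⟨⟨c₁.1 ⊔ c₂.1, isCompactElement_sup c₁.2.1 c₂.2.1, sup_le c₁.2.2 c₂.2.2⟩,
      fun _ hp hle => hp (le_sup_left.trans hle), fun _ hp hle => hp (le_sup_right.trans hle)⟩
  obtain ⟨⟨c, hc, hct⟩, hc_cov⟩ :=
    hmin.elim_directed_cover (fun c : K => {p : Spec C | ¬ c.1 ≤ p.1})
      (fun c => isOpen_zariski_basic c.1) hcov hdir
  exact ⟨c, hc, hct,
    (ann_eq_bot_iff h hc).2 fun p hp => hc_cov (show (⟨p, hp.1⟩ : Spec C) ∈ _ from hp)⟩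

lemma isCompact_of_minPrimesCoverCond (h : Semiprime C) (hcond : MinPrimesCoverCond C) :
    @IsCompact (Spec C) (zariskiTop C) {q : Spec C | IsMinPrime q.1} := by
  let := zariskiTop C
  refine isCompact_generateFrom rfl fun P hP hcov => ?_
  choose τ hτ using hP
  obtain ⟨c, hc, hcle, hcann⟩ := hcond (⨆ U : P, τ U.2) fun p hp hle => by
    obtain ⟨U, hUP, hpU⟩ := hcov (show (⟨p, hp.1⟩ : Spec C) ∈ _ from hp)
    rw [hτ hUP] at hpU
    exact hpU ((le_iSup (fun U : P => τ U.2) ⟨U, hUP⟩).trans hle)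
  obtain ⟨F, hF⟩ := IsCompactElement.exists_finset_of_le_iSup C hc _ hcle
  refine ⟨Subtype.val '' (F : Set P), fun _ ⟨U, _, hU⟩ => hU ▸ U.2, F.finite_toSet.image _,
    fun q hq => ?_⟩
  have hFq : ¬ (⨆ U ∈ F, τ U.2) ≤ q.1 :=
    fun hle => (ann_eq_bot_iff h hc).1 hcann q.1 hq (hF.trans hle)
  simp only [iSup₂_le_iff, not_forall] at hFq
  obtain ⟨U, hUF, hUq⟩ := hFq
  exact ⟨U.1, ⟨U, hUF, rfl⟩, (hτ U.2).symm ▸ hUq⟩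

lemma isCompact_minPrimes_iff (h : Semiprime C) :
    @IsCompact (Spec C) (zariskiTop C) {q : Spec C | IsMinPrime q.1} ↔ MinPrimesCoverCond C :=
  ⟨minPrimesCoverCond_of_isCompact h, isCompact_of_minPrimesCoverCond h⟩

lemma minPrimesCoverCond_of_pp (hpp : PP C) : MinPrimesCoverCond C := by
  intro t ht
  set K := {c : C | IsCompactElement c ∧ c ≤ t}
  have htop : ⊤ ≤ sSup ((ann ∘ ann) '' K) := by
    by_contra hne
    obtain ⟨q, hq, hle⟩ := exists_isPrime_ge fun htop => hne htop.ge
    obtain ⟨p, hp, hpq⟩ := exists_isMinPrime_le hq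
    refine ht p hp (le_iff_compact_le_imp.2 fun c hc hct =>
      (hp.1.le_or_le_of_comm_eq_bot (comm_ann c)).resolve_right fun hcp => hq.1 (top_unique ?_))
    have hcK : c ∈ K := ⟨hc, hct⟩
    calc ⊤ = ann c ⊔ ann (ann c) := ((hpp c hc).sup_ann_eq_top).symm
      _ ≤ q := sup_le (hcp.trans hpq) ((le_sSup (Set.mem_image_of_mem (ann ∘ ann) hcK)).trans hle)
  obtain ⟨_, ⟨c, ⟨hc, hct⟩, rfl⟩, hc_top⟩ :=
    (isCompactElement_iff_le_of_directed_sSup_le _ _).1 top_isCompact ((ann ∘ ann) '' K)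
      ⟨_, ⊥, ⟨isCompactElement_bot, bot_le⟩, rfl⟩
      ((directedOn_compact_le t).mono_comp fun _ _ hle => ann_antitone (ann_antitone hle)) htop
  exact ⟨c, hc, hct, ann_eq_bot_of_ann_ann_eq_top (top_unique hc_top)⟩

lemma pp_of_pf_of_minPrimesCoverCond (h : Semiprime C) (hpf : PF C)
    (hcond : MinPrimesCoverCond C) : PP C := by
  intro a ha
  obtain ⟨c, hc, hcle, hcann⟩ := hcond (a ⊔ ann a) fun p hp hle =>
    hp.ann_not_le h ha (le_sup_left.trans hle) (le_sup_right.trans hle)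
  obtain ⟨b, hb, hba, hcab⟩ := exists_compact_le_sup_of_le_sup hc hcle
  refine ⟨ann b, hpf a ha b hb hba, le_bot_iff.1 ?_⟩
  calc ann a ⊓ ann b = ann (a ⊔ b) := (ann_sup a b).symm
    _ ≤ ann c := ann_antitone hcab
    _ = ⊥ := hcann

theorem statement18 (h : Semiprime C) :
    (PP C ↔ MP C ∧ @IsCompact (Spec C) (zariskiTop C) {q : Spec C | IsMinPrime q.1}) ∧
    (PP C ↔ PF C ∧ @IsCompact (Spec C) (zariskiTop C) {q : Spec C | IsMinPrime q.1}) := by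
  have hpp : PP C ↔ PF C ∧ MinPrimesCoverCond C :=
    ⟨fun hpp => ⟨pf_of_pp hpp, minPrimesCoverCond_of_pp hpp⟩,
      fun ⟨hpf, hcond⟩ => pp_of_pf_of_minPrimesCoverCond h hpf hcond⟩
  have hmp : MP C ↔ PF C := ⟨pf_of_mp h, mp_of_pf h⟩
  rw [isCompact_minPrimes_iff h, hmp]
  exact ⟨hpp, hpp⟩

end CommutatorLattice
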